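/- arXiv:2407.03565 — 3 statements merged into one kernel-verified Lean document; each statement's English description precedes it below -/
import Mathlib

section
/- Let σ₁, σ₂, σ₃ ∈ ℝ with σ₁ + σ₂ ≠ 0. Then there exists a constant C₀ > 0, depending only on σ₁, σ₂, σ₃, such that the following holds: if τ₀, τ₁, τ₂, τ₃ ∈ ℝ and ξ₁, ξ₂, ξ₃ ∈ ℝ^d satisfy τ₀ + τ₁ + τ₂ + τ₃ = 0, ξ₁ + ξ₂ + ξ₃ = 0, and |ξ₃| ≤ C₀ |ξ₁|, then |τ₀| + max_{1≤j≤3} |τⱼ + σⱼ|ξⱼ|²| ≥ C₀ |ξ₁|². -/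
/-!
Write `Φ = σ₁|ξ₁|² + σ₂|ξ₂|² + σ₃|ξ₃|²`. Since the `τ`'s sum to zero, `Φ` is the sum of `τ₀` and
the three modulations `τⱼ + σⱼ|ξⱼ|²`, so `|Φ|` is at most `|τ₀| + 3 max_j |τⱼ + σⱼ|ξⱼ|²|`.
Substituting `ξ₂ = -(ξ₁ + ξ₃)` gives `Φ = (σ₁ + σ₂)|ξ₁|² + 2σ₂⟨ξ₁, ξ₃⟩ + (σ₂ + σ₃)|ξ₃|²`; when
`|ξ₃| ≤ C₀|ξ₁|` with `C₀` small compared to `|σ₁ + σ₂|`, the first term dominates and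
`|Φ| ≥ 3 C₀ |ξ₁|²`.
-/

lemma abs_add_add_le_of_add_add_add_eq_zero {τ₀ τ₁ τ₂ τ₃ : ℝ} (hτ : τ₀ + τ₁ + τ₂ + τ₃ = 0)
    (e₁ e₂ e₃ : ℝ) :
    |e₁ + e₂ + e₃| ≤ |τ₀| + 3 * max (max |τ₁ + e₁| |τ₂ + e₂|) |τ₃ + e₃| := by
  have h₁ : |τ₁ + e₁| ≤ max (max |τ₁ + e₁| |τ₂ + e₂|) |τ₃ + e₃| :=
    le_max_of_le_left (le_max_left _ _)
  have h₂ : |τ₂ + e₂| ≤ max (max |τ₁ + e₁| |τ₂ + e₂|) |τ₃ + e₃| :=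
    le_max_of_le_left (le_max_right _ _)
  have h₃ : |τ₃ + e₃| ≤ max (max |τ₁ + e₁| |τ₂ + e₂|) |τ₃ + e₃| := le_max_right _ _
  have hsum : e₁ + e₂ + e₃ = τ₀ + (τ₁ + e₁) + (τ₂ + e₂) + (τ₃ + e₃) := by linarith
  calc |e₁ + e₂ + e₃|
      ≤ |τ₀| + |τ₁ + e₁| + |τ₂ + e₂| + |τ₃ + e₃| := by
        rw [hsum]
        exact (abs_add_le _ _).trans
          (add_le_add_left ((abs_add_le _ _).trans (add_le_add_left (abs_add_le _ _) _)) _)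
    _ ≤ |τ₀| + 3 * max (max |τ₁ + e₁| |τ₂ + e₂|) |τ₃ + e₃| := by linarith

section InnerProductSpace

variable {E : Type*} [NormedAddCommGroup E] [InnerProductSpace ℝ E]

lemma sub_le_abs_quadratic_add (σ₁ σ₂ σ₃ : ℝ) (x y : E) :
    |σ₁ + σ₂| * ‖x‖ ^ 2 - 2 * |σ₂| * (‖x‖ * ‖y‖) - (|σ₂| + |σ₃|) * ‖y‖ ^ 2 ≤
      |σ₁ * ‖x‖ ^ 2 + σ₂ * ‖x + y‖ ^ 2 + σ₃ * ‖y‖ ^ 2| := by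
  have hexpand : σ₁ * ‖x‖ ^ 2 + σ₂ * ‖x + y‖ ^ 2 + σ₃ * ‖y‖ ^ 2 =
      (σ₁ + σ₂) * ‖x‖ ^ 2 + 2 * σ₂ * inner ℝ x y + (σ₂ + σ₃) * ‖y‖ ^ 2 := by
    rw [norm_add_sq_real]; ring
  have hcross : |2 * σ₂ * inner ℝ x y| ≤ 2 * |σ₂| * (‖x‖ * ‖y‖) := by
    rw [abs_mul, abs_mul, abs_two]
    exact mul_le_mul_of_nonneg_left (abs_real_inner_le_norm x y) (by positivity)
  have hlast : |(σ₂ + σ₃) * ‖y‖ ^ 2| ≤ (|σ₂| + |σ₃|) * ‖y‖ ^ 2 := by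
    rw [abs_mul, abs_of_nonneg (by positivity : (0 : ℝ) ≤ ‖y‖ ^ 2)]
    exact mul_le_mul_of_nonneg_right (abs_add_le _ _) (by positivity)
  have hfirst : |(σ₁ + σ₂) * ‖x‖ ^ 2| = |σ₁ + σ₂| * ‖x‖ ^ 2 := by
    rw [abs_mul, abs_of_nonneg (by positivity : (0 : ℝ) ≤ ‖x‖ ^ 2)]
  rw [hexpand]
  have htriangle : ∀ a b c : ℝ, |a| ≤ |a + b + c| + |b| + |c| := fun a b c =>
    calc |a| = |a + b + c - b - c| := by ring_nf
      _ ≤ |a + b + c - b| + |c| := abs_sub _ _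
      _ ≤ |a + b + c| + |b| + |c| := add_le_add_left (abs_sub _ _) _
  linarith [htriangle ((σ₁ + σ₂) * ‖x‖ ^ 2) (2 * σ₂ * inner ℝ x y) ((σ₂ + σ₃) * ‖y‖ ^ 2)]

end InnerProductSpace

lemma mul_sq_le_quadratic_of_le_mul {s a b C t u : ℝ} (ha : 0 ≤ a) (hb : 0 ≤ b) (ht : 0 ≤ t)
    (hu : 0 ≤ u) (hC : 0 ≤ C) (hC₁ : C ≤ 1) (huC : u ≤ C * t) :
    (s - (2 * a + b) * C) * t ^ 2 ≤ s * t ^ 2 - 2 * a * (t * u) - b * u ^ 2 := by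
  have htu : t * u ≤ C * t ^ 2 :=
    calc t * u ≤ t * (C * t) := mul_le_mul_of_nonneg_left huC ht
      _ = C * t ^ 2 := by ring
  have huu : u ^ 2 ≤ C * t ^ 2 := by
    nlinarith [mul_le_mul huC huC hu (by positivity),
      mul_le_mul_of_nonneg_right hC₁ (mul_nonneg hC (sq_nonneg t))]
  nlinarith [mul_le_mul_of_nonneg_left htu ha, mul_le_mul_of_nonneg_left huu hb]

theorem modulation_lower_bound (d : ℕ) (σ₁ σ₂ σ₃ : ℝ) (h12 : σ₁ + σ₂ ≠ 0) :
    ∃ C₀ > (0 : ℝ), ∀ (τ₀ τ₁ τ₂ τ₃ : ℝ) (ξ₁ ξ₂ ξ₃ : EuclideanSpace ℝ (Fin d)),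
      τ₀ + τ₁ + τ₂ + τ₃ = 0 → ξ₁ + ξ₂ + ξ₃ = 0 → ‖ξ₃‖ ≤ C₀ * ‖ξ₁‖ →
      |τ₀| + max (max |τ₁ + σ₁ * ‖ξ₁‖ ^ 2| |τ₂ + σ₂ * ‖ξ₂‖ ^ 2|) |τ₃ + σ₃ * ‖ξ₃‖ ^ 2|
        ≥ C₀ * ‖ξ₁‖ ^ 2 := by
  -- `3 C₀` pays for the factor `3` in front of the max, `(3|σ₂| + |σ₃|) C₀` for the error terms.
  set M := 3 + 3 * |σ₂| + |σ₃|
  have hM : 0 < M := by positivity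
  obtain ⟨C₀, hC₀, hC₀_le_one, hMC₀⟩ : ∃ C₀ : ℝ, 0 < C₀ ∧ C₀ ≤ 1 ∧ M * C₀ ≤ |σ₁ + σ₂| :=
    ⟨min 1 (|σ₁ + σ₂| / M), lt_min one_pos (div_pos (abs_pos.mpr h12) hM), min_le_left _ _,
      (le_div_iff₀' hM).mp (min_le_right _ _)⟩
  refine ⟨C₀, hC₀, fun τ₀ τ₁ τ₂ τ₃ ξ₁ ξ₂ ξ₃ hτ hξ hsmall => ?_⟩
  have hξ₂ : ‖ξ₂‖ = ‖ξ₁ + ξ₃‖ := by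
    rw [eq_neg_of_add_eq_zero_left (by rw [← hξ]; abel : ξ₂ + (ξ₁ + ξ₃) = 0), norm_neg]
  have hlower := (mul_sq_le_quadratic_of_le_mul (abs_nonneg σ₂) (add_nonneg (abs_nonneg σ₂)
    (abs_nonneg σ₃)) (norm_nonneg ξ₁) (norm_nonneg ξ₃) hC₀.le hC₀_le_one hsmall).trans
      (sub_le_abs_quadratic_add σ₁ σ₂ σ₃ ξ₁ ξ₃)
  have hupper := abs_add_add_le_of_add_add_add_eq_zero hτ
    (σ₁ * ‖ξ₁‖ ^ 2) (σ₂ * ‖ξ₂‖ ^ 2) (σ₃ * ‖ξ₃‖ ^ 2)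
  rw [hξ₂] at hupper ⊢
  nlinarith [abs_nonneg τ₀, mul_nonneg (sub_nonneg.mpr hMC₀) (sq_nonneg ‖ξ₁‖)]
end

section
/- Let α, β, γ be nonzero real numbers with α ≠ β, set μ = βγ - γα - αβ, and assume μ ≤ 0. Let k be a real root of αk² - β(k-1)² - γ = 0. Then there exists a constant C > 0 (depending only on α, β, γ) such that for all integers p and all nonzero integers q with |k - p/q| ≤ 1/q², one has |αp² - β(p-q)² - γq²| ≤ C. -/
/-!
If `k` is a root of `a X² + b X + c`, the form factors as
`a p² + b p q + c q² = (p - k q) (a (p - k q) + (2 a k + b) q)`.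
A good rational approximation `p / q` of `k` makes the first factor `O(1 / |q|)` and the second
`O(|q|)`, so their product stays bounded.
-/

lemma quadratic_form_eq_mul_of_root {a b c k : ℝ} (hk : a * k ^ 2 + b * k + c = 0) (p q : ℝ) :
    a * p ^ 2 + b * p * q + c * q ^ 2 = (p - k * q) * (a * (p - k * q) + (2 * a * k + b) * q) := by
  linear_combination q ^ 2 * hk

lemma abs_sub_mul_le_of_abs_sub_div_le {k p q : ℝ} (hq : q ≠ 0) (h : |k - p / q| ≤ 1 / q ^ 2) :
    |p - k * q| ≤ 1 / |q| := by
  have hq' : 0 < |q| := abs_pos.mpr hq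
  calc |p - k * q| = |q| * |k - p / q| := by
        rw [← abs_mul, ← abs_neg]; congr 1; field_simp; ring
    _ ≤ |q| * (1 / q ^ 2) := by gcongr
    _ = 1 / |q| := by rw [← sq_abs]; field_simp

lemma abs_quadratic_form_le_of_root {a b c k p q : ℝ} (hk : a * k ^ 2 + b * k + c = 0)
    (hq : 1 ≤ |q|) (h : |p - k * q| ≤ 1 / |q|) :
    |a * p ^ 2 + b * p * q + c * q ^ 2| ≤ |a| + |2 * a * k + b| := by
  have hq0 : 0 < |q| := one_pos.trans_le hq
  have hinv : 1 / |q| ≤ 1 := (div_le_one hq0).mpr hq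
  have hsecond : |a * (p - k * q) + (2 * a * k + b) * q| ≤ |a| / |q| + |2 * a * k + b| * |q| :=
    calc _ ≤ |a| * |p - k * q| + |2 * a * k + b| * |q| := by
          simpa only [abs_mul] using abs_add_le (a * (p - k * q)) ((2 * a * k + b) * q)
      _ ≤ |a| * (1 / |q|) + |2 * a * k + b| * |q| := by gcongr
      _ = _ := by ring
  rw [quadratic_form_eq_mul_of_root hk, abs_mul]
  calc _ ≤ 1 / |q| * (|a| / |q| + |2 * a * k + b| * |q|) :=
        mul_le_mul h hsecond (abs_nonneg _) (by positivity)
    _ = |a| / |q| * (1 / |q|) + |2 * a * k + b| := by field_simp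
    _ ≤ |a| / |q| * 1 + |2 * a * k + b| := by gcongr
    _ ≤ |a| + |2 * a * k + b| := by
        rw [mul_one]; gcongr; exact div_le_self (abs_nonneg a) hq

theorem exists_bound_quadratic_form_of_root {a b c k : ℝ} (hk : a * k ^ 2 + b * k + c = 0) :
    ∃ C > (0 : ℝ), ∀ (p q : ℤ), q ≠ 0 → |k - (p : ℝ) / (q : ℝ)| ≤ 1 / (q : ℝ) ^ 2 →
      |a * (p : ℝ) ^ 2 + b * (p : ℝ) * (q : ℝ) + c * (q : ℝ) ^ 2| ≤ C := by
  refine ⟨|a| + |2 * a * k + b| + 1, by positivity, fun p q hq h => ?_⟩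
  have hq' : (1 : ℝ) ≤ |(q : ℝ)| := by exact_mod_cast Int.one_le_abs hq
  have := abs_quadratic_form_le_of_root hk hq'
    (abs_sub_mul_le_of_abs_sub_div_le (Int.cast_ne_zero.mpr hq) h)
  linarith

theorem diophantine_resonance_bound_general (α β γ k : ℝ)
    (hk : α * k ^ 2 - β * (k - 1) ^ 2 - γ = 0) :
    ∃ C > (0 : ℝ), ∀ (p q : ℤ), q ≠ 0 → |k - (p : ℝ) / (q : ℝ)| ≤ 1 / (q : ℝ) ^ 2 →
      |α * (p : ℝ) ^ 2 - β * ((p : ℝ) - (q : ℝ)) ^ 2 - γ * (q : ℝ) ^ 2| ≤ C := by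
  have hk' : (α - β) * k ^ 2 + 2 * β * k + (-β - γ) = 0 := by linear_combination hk
  obtain ⟨C, hC, hbound⟩ := exists_bound_quadratic_form_of_root hk'
  refine ⟨C, hC, fun p q hq h => ?_⟩
  convert hbound p q hq h using 2
  ring

theorem diophantine_resonance_bound (α β γ k : ℝ)
    (hα : α ≠ 0) (hβ : β ≠ 0) (hγ : γ ≠ 0) (hab : α ≠ β)
    (hμ : β * γ - γ * α - α * β ≤ 0)
    (hk : α * k ^ 2 - β * (k - 1) ^ 2 - γ = 0) :
    ∃ C > (0 : ℝ), ∀ (p q : ℤ), q ≠ 0 → |k - (p : ℝ) / (q : ℝ)| ≤ 1 / (q : ℝ) ^ 2 →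
      |α * (p : ℝ) ^ 2 - β * ((p : ℝ) - (q : ℝ)) ^ 2 - γ * (q : ℝ) ^ 2| ≤ C :=
  diophantine_resonance_bound_general α β γ k hk
end

section
/- Fix real numbers α, β, γ, k, N with αk² - β(k-1)² - γ = 0. Suppose f, g, h : ℝ → ℂ are differentiable and satisfy f'(t) = -N g(t) h(t), g'(t) = N f(t) conj(h(t)), h'(t) = N f(t) conj(g(t)). Define u(t,x) = f(t) e^{-itαk²N²} e^{ikNx}, v(t,x) = g(t) e^{-itβ(k-1)²N²} e^{i(k-1)Nx}, w(t,x) = h(t) e^{-itγN²} e^{iNx}. Then (u, v, w) solves the system i∂ₜu + α∂ₓ²u = -(∂ₓw)·v, i∂ₜv + β∂ₓ²v = -(∂ₓ conj(w))·u, i∂ₜw + γ∂ₓ²w = ∂ₓ(u·conj(v)) for all (t,x) ∈ ℝ × ℝ. -/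
/-!
Each of `u, v, w` lies on the dispersion curve `ω = a ξ²` of its own free Schrödinger operator
`i∂ₜ + a∂ₓ²`, which therefore acts on it as `i F'(t)` times the two phases. Products and
conjugates of plane waves are plane waves with added, resp. negated, frequencies; the resonance
condition `αk² - β(k-1)² - γ = 0` and `kN - (k-1)N = N` make the phases of both sides of each
equation agree, and the ODE system matches the amplitudes.
-/

/-- The plane wave `F(t) e^{-iωt} e^{iξx}`. -/
noncomputable def planeWave (F : ℝ → ℂ) (ω ξ : ℝ) (t x : ℝ) : ℂ :=
  F t * Complex.exp (-(Complex.I) * (ω : ℂ) * (t : ℂ)) *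
    Complex.exp (Complex.I * (ξ : ℂ) * (x : ℂ))

open Complex

lemma hasDerivAt_cexp_const_mul_ofReal (c : ℂ) (s : ℝ) :
    HasDerivAt (fun s' : ℝ => exp (c * s')) (c * exp (c * s)) s := by
  simpa [mul_comm] using ((hasDerivAt_id s).ofReal_comp.const_mul c).cexp

namespace planeWave

variable (F G : ℝ → ℂ) (ω ω' ξ ξ' t x : ℝ)

lemma conj_apply :
    starRingEnd ℂ (planeWave F ω ξ t x) =
      planeWave (fun s => starRingEnd ℂ (F s)) (-ω) (-ξ) t x := by
  simp only [planeWave, map_mul, ← exp_conj, map_neg, conj_I, conj_ofReal, ofReal_neg]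
  ring_nf

lemma mul_apply :
    planeWave F ω ξ t x * planeWave G ω' ξ' t x =
      planeWave (fun s => F s * G s) (ω + ω') (ξ + ξ') t x := by
  simp only [planeWave, ofReal_add]
  rw [mul_add, mul_add, add_mul, add_mul, exp_add, exp_add]
  ring

lemma hasDerivAt_space :
    HasDerivAt (fun x' => planeWave F ω ξ t x') (I * ξ * planeWave F ω ξ t x) x := by
  have h : HasDerivAt (fun x' => planeWave F ω ξ t x') _ x :=
    (hasDerivAt_cexp_const_mul_ofReal (I * ξ) x).const_mul (F t * exp (-I * ω * t))
  exact h.congr_deriv (by unfold planeWave; ring)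

lemma deriv_space :
    deriv (fun x' => planeWave F ω ξ t x') x = I * ξ * planeWave F ω ξ t x :=
  (hasDerivAt_space F ω ξ t x).deriv

lemma deriv_deriv_space :
    deriv (deriv fun x' => planeWave F ω ξ t x') x = -(ξ ^ 2 : ℂ) * planeWave F ω ξ t x := by
  have h := ((hasDerivAt_space F ω ξ t x).const_mul (I * ξ)).deriv
  rw [funext (deriv_space F ω ξ t), h]
  linear_combination (ξ ^ 2 * planeWave F ω ξ t x : ℂ) * I_sq

variable {F t}

lemma deriv_time (hF : DifferentiableAt ℝ F t) :
    deriv (fun t' => planeWave F ω ξ t' x) t =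
      planeWave (deriv F) ω ξ t x - I * ω * planeWave F ω ξ t x := by
  have h : HasDerivAt (fun t' => planeWave F ω ξ t' x) _ t :=
    (hF.hasDerivAt.mul (hasDerivAt_cexp_const_mul_ofReal (-I * ω) t)).mul_const (exp (I * ξ * x))
  rw [h.deriv]
  simp only [planeWave]
  ring

lemma schrodinger_eq {a : ℝ} (hω : ω = a * ξ ^ 2) (hF : DifferentiableAt ℝ F t) :
    I * deriv (fun t' => planeWave F ω ξ t' x) t +
        a * deriv (deriv fun x' => planeWave F ω ξ t x') x =
      I * planeWave (deriv F) ω ξ t x := by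
  rw [deriv_time ω ξ x hF, deriv_deriv_space, hω]
  push_cast
  linear_combination (-(a * ξ ^ 2 * planeWave F (a * ξ ^ 2) ξ t x) : ℂ) * I_sq

end planeWave

theorem plane_wave_solves_system (α β γ k N : ℝ) (f g h : ℝ → ℂ)
    (hres : α * k ^ 2 - β * (k - 1) ^ 2 - γ = 0)
    (hf : Differentiable ℝ f) (hg : Differentiable ℝ g) (hh : Differentiable ℝ h)
    (hf' : ∀ t, deriv f t = -(N : ℂ) * g t * h t)
    (hg' : ∀ t, deriv g t = (N : ℂ) * f t * (starRingEnd ℂ) (h t))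
    (hh' : ∀ t, deriv h t = (N : ℂ) * f t * (starRingEnd ℂ) (g t)) :
    ∀ t x : ℝ,
      (Complex.I * deriv (fun t' : ℝ => planeWave f (α * k ^ 2 * N ^ 2) (k * N) t' x) t
          + (α : ℂ) *
            deriv (deriv (fun x' : ℝ => planeWave f (α * k ^ 2 * N ^ 2) (k * N) t x')) x
        = -(deriv (fun x' : ℝ => planeWave h (γ * N ^ 2) N t x') x) *
            planeWave g (β * (k - 1) ^ 2 * N ^ 2) ((k - 1) * N) t x) ∧
      (Complex.I * deriv (fun t' : ℝ => planeWave g (β * (k - 1) ^ 2 * N ^ 2) ((k - 1) * N) t' x) t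
          + (β : ℂ) *
            deriv (deriv (fun x' : ℝ =>
              planeWave g (β * (k - 1) ^ 2 * N ^ 2) ((k - 1) * N) t x')) x
        = -(deriv (fun x' : ℝ => (starRingEnd ℂ) (planeWave h (γ * N ^ 2) N t x')) x) *
            planeWave f (α * k ^ 2 * N ^ 2) (k * N) t x) ∧
      (Complex.I * deriv (fun t' : ℝ => planeWave h (γ * N ^ 2) N t' x) t
          + (γ : ℂ) * deriv (deriv (fun x' : ℝ => planeWave h (γ * N ^ 2) N t x')) x
        = deriv (fun x' : ℝ => planeWave f (α * k ^ 2 * N ^ 2) (k * N) t x' *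
            (starRingEnd ℂ) (planeWave g (β * (k - 1) ^ 2 * N ^ 2) ((k - 1) * N) t x')) x) := by
  intro t x
  have hω₁ : γ * N ^ 2 + β * (k - 1) ^ 2 * N ^ 2 = α * k ^ 2 * N ^ 2 := by
    linear_combination -N ^ 2 * hres
  have hω₂ : -(γ * N ^ 2) + α * k ^ 2 * N ^ 2 = β * (k - 1) ^ 2 * N ^ 2 := by
    linear_combination N ^ 2 * hres
  have hω₃ : α * k ^ 2 * N ^ 2 + -(β * (k - 1) ^ 2 * N ^ 2) = γ * N ^ 2 := by
    linear_combination N ^ 2 * hres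
  have hξ₁ : N + (k - 1) * N = k * N := by ring
  have hξ₂ : -N + k * N = (k - 1) * N := by ring
  have hξ₃ : k * N + -((k - 1) * N) = N := by ring
  refine ⟨?_, ?_, ?_⟩
  · rw [planeWave.schrodinger_eq _ _ _ (by ring) (hf t), planeWave.deriv_space, neg_mul,
      mul_assoc (I * _), planeWave.mul_apply, hω₁, hξ₁]
    simp only [planeWave, hf']
    ring
  · simp_rw [planeWave.conj_apply]
    rw [planeWave.schrodinger_eq _ _ _ (by ring) (hg t), planeWave.deriv_space, neg_mul,
      mul_assoc (I * _), planeWave.mul_apply, hω₂, hξ₂]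
    simp only [planeWave, hg', ofReal_neg]
    ring
  · simp_rw [planeWave.conj_apply, planeWave.mul_apply]
    rw [hω₃, hξ₃, planeWave.schrodinger_eq _ _ _ (by ring) (hh t), planeWave.deriv_space]
    simp only [planeWave, hh']
    ring
end
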